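/- arXiv:2209.08731 — 6 statements merged into one kernel-verified Lean document; each statement's English description precedes it below -/
import Mathlib

section
/- For any sequence s_1, …, s_m of integers each at least 2, letting S denote the set of values occurring in the sequence, for every integer r ≥ 2 the number of integers in {2, …, r} not contained in S is at most max{r − m − 1, 0} + A(s_1, …, s_m), where A(s_1, …, s_m) = Σ_{j=1}^{m−1} |s_j − s_{j+1} − 1| + |s_m − 2|. -/
/-- The potential function
`A(s_0, …, s_{m−1}) = ∑_{j=0}^{m−2} |s_j − s_{j+1} − 1| + |s_{m−1} − 2|`. -/
def potA (m : ℕ) (s : ℕ → ℕ) : ℕ :=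
  (∑ j ∈ Finset.range (m - 1), ((s j : ℤ) - (s (j + 1) : ℤ) - 1).natAbs)
    + ((s (m - 1) : ℤ) - 2).natAbs

/-- For a sequence `s_0, …, s_{m−1}` of integers each at least `2`, with `S` the
set of values occurring in the sequence, for every `r ≥ 2` the number of
integers in `{2, …, r}` not contained in `S` is at most
`max(r − m − 1, 0) + A(s_0, …, s_{m−1})`. -/
theorem stmt_2 (m : ℕ) (hm : 1 ≤ m) (s : ℕ → ℕ) (hs : ∀ j < m, 2 ≤ s j)
    (r : ℕ) (hr : 2 ≤ r) :
    ((Finset.Icc 2 r) \ ((Finset.range m).image s)).card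
      ≤ (r - m - 1) + potA m s := by
  classical
  set t := s (m - 1) with htdef
  have ht : 2 ≤ t := hs _ (by omega)
  have hs0 : 2 ≤ s 0 := hs 0 hm
  set Pn := ∑ j ∈ Finset.range (m - 1), (s j - (s (j+1) + 1)) with hPn
  set Nn := ∑ j ∈ Finset.range (m - 1), ((s (j+1) + 1) - s j) with hNn
  set An := ∑ j ∈ Finset.range (m - 1), ((s j : ℤ) - (s (j + 1) : ℤ) - 1).natAbs with hAn
  -- Pn + Nn = An
  have hPA : Pn + Nn = An := by
    rw [hPn, hNn, hAn, ← Finset.sum_add_distrib]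
    exact Finset.sum_congr rfl (fun j _ => by omega)
  -- telescoping identity
  have hE : (Pn : ℤ) - (Nn : ℤ) = (s 0 : ℤ) - t - (m - 1) := by
    have h1 : (Pn : ℤ) - (Nn : ℤ)
        = ∑ j ∈ Finset.range (m - 1), ((s j : ℤ) - (s (j + 1) : ℤ) - 1) := by
      rw [hPn, hNn, Nat.cast_sum, Nat.cast_sum, ← Finset.sum_sub_distrib]
      exact Finset.sum_congr rfl (fun j _ => by omega)
    have h2 : ∑ j ∈ Finset.range (m - 1), ((s j : ℤ) - (s (j + 1) : ℤ) - 1)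
        = ((s 0 : ℤ) - s (m - 1)) - (m - 1) := by
      rw [Finset.sum_sub_distrib, Finset.sum_range_sub' (fun i => (s i : ℤ)),
        Finset.sum_const, Finset.card_range, nsmul_eq_mul, mul_one]
      omega
    rw [h1, h2, htdef]
  -- the covering
  have hsub : (Finset.Icc 2 r \ (Finset.range m).image s) ⊆
      (Finset.Ioc (s 0) r ∪
        (Finset.range (m-1)).biUnion (fun j => Finset.Ioo (s (j+1)) (s j))) ∪
        Finset.Ioo 1 t := by
    intro v hv
    simp only [Finset.mem_sdiff, Finset.mem_Icc, Finset.mem_image,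
      Finset.mem_range, not_exists] at hv
    obtain ⟨⟨h2v, hvr⟩, hvS⟩ := hv
    have hne : ∀ j, j < m → s j ≠ v := by
      intro j hj he
      exact hvS j ⟨hj, he⟩
    simp only [Finset.mem_union, Finset.mem_Ioc, Finset.mem_Ioo,
      Finset.mem_biUnion, Finset.mem_range]
    by_cases h1 : s 0 < v
    · exact Or.inl (Or.inl ⟨h1, hvr⟩)
    · by_cases h2 : ∃ j, j < m ∧ s j < v
      · left; right
        have hkm : Nat.find h2 < m := (Nat.find_spec h2).1
        have hkv : s (Nat.find h2) < v := (Nat.find_spec h2).2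
        have hk0 : Nat.find h2 ≠ 0 := by
          intro h
          rw [h] at hkv
          omega
        have hkmin : ¬ (Nat.find h2 - 1 < m ∧ s (Nat.find h2 - 1) < v) :=
          Nat.find_min h2 (by omega)
        have hprev : v < s (Nat.find h2 - 1) := by
          have := hne (Nat.find h2 - 1) (by omega)
          omega
        refine ⟨Nat.find h2 - 1, by omega, ?_, hprev⟩
        have h5 : Nat.find h2 - 1 + 1 = Nat.find h2 := by omega
        rw [h5]
        exact hkv
      · push_neg at h2
        have h3 := h2 (m - 1) (by omega)
        have h4 := hne (m - 1) (by omega)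
        right
        exact ⟨by omega, by omega⟩
  have hcard : (Finset.Icc 2 r \ (Finset.range m).image s).card
      ≤ (r - s 0) + Pn + (t - 1 - 1) := by
    calc (Finset.Icc 2 r \ (Finset.range m).image s).card
        ≤ ((Finset.Ioc (s 0) r ∪
            (Finset.range (m-1)).biUnion (fun j => Finset.Ioo (s (j+1)) (s j))) ∪
            Finset.Ioo 1 t).card := Finset.card_le_card hsub
      _ ≤ (Finset.Ioc (s 0) r ∪
            (Finset.range (m-1)).biUnion (fun j => Finset.Ioo (s (j+1)) (s j))).card
            + (Finset.Ioo 1 t).card := Finset.card_union_le _ _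
      _ ≤ (Finset.Ioc (s 0) r).card
            + ((Finset.range (m-1)).biUnion (fun j => Finset.Ioo (s (j+1)) (s j))).card
            + (Finset.Ioo 1 t).card := by
          gcongr
          exact Finset.card_union_le _ _
      _ ≤ (r - s 0) + Pn + (t - 1 - 1) := by
          rw [Nat.card_Ioc, Nat.card_Ioo]
          gcongr
          calc ((Finset.range (m-1)).biUnion (fun j => Finset.Ioo (s (j+1)) (s j))).card
              ≤ ∑ j ∈ Finset.range (m-1), (Finset.Ioo (s (j+1)) (s j)).card :=
                Finset.card_biUnion_le
            _ = Pn := by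
                rw [hPn]
                exact Finset.sum_congr rfl (fun j _ => by rw [Nat.card_Ioo]; omega)
  have hpot : potA m s = An + (t - 2) := by
    rw [potA, ← hAn, ← htdef]
    omega
  rw [hpot]
  omega
end

section
/- For any sequence s_1, …, s_m of positive integers with A(s_1, …, s_m) ≤ d, at least (m − d)/2 of the terms s_j satisfy s_j ≥ (m − d)/2. -/
/-- For any sequence `s_0, …, s_{m−1}` of positive integers with
`A(s_0, …, s_{m−1}) ≤ d`, at least `(m − d)/2` of the terms `s_j` satisfy
`s_j ≥ (m − d)/2`. -/
theorem stmt_3 (m d : ℕ) (hm : 1 ≤ m) (s : ℕ → ℕ) (hs : ∀ j < m, 1 ≤ s j)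
    (hA : potA m s ≤ d) :
    ((m : ℚ) - d) / 2 ≤
      (((Finset.range m).filter (fun j => ((m : ℚ) - d) / 2 ≤ (s j : ℚ))).card : ℚ) := by
  -- Key bound: s j ≥ m - j - d for all j < m
  have main : ∀ k, k ≤ m - 1 → (k : ℤ) + 1 ≤ (s (m - 1 - k) : ℤ) +
      ∑ i ∈ Finset.Ico (m - 1 - k) (m - 1), (((s i : ℤ) - (s (i + 1) : ℤ) - 1).natAbs : ℤ) := by
    intro k
    induction k with
    | zero =>
      intro _
      simp only [Nat.sub_zero, Finset.Ico_self, Finset.sum_empty, add_zero, Nat.cast_zero,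
        zero_add]
      exact_mod_cast hs (m - 1) (by omega)
    | succ k ih =>
      intro hk
      have ih' := ih (by omega)
      have hj : m - 1 - (k + 1) + 1 = m - 1 - k := by omega
      have hlt : m - 1 - (k + 1) < m - 1 := by omega
      rw [Finset.sum_eq_sum_Ico_succ_bot hlt, hj]
      have hstep : (s (m - 1 - k) : ℤ) ≤ (s (m - 1 - (k + 1)) : ℤ) +
          (((s (m - 1 - (k + 1)) : ℤ) - (s (m - 1 - (k + 1) + 1) : ℤ) - 1).natAbs : ℤ) - 1 := by
      -- since x - y - 1 ≥ -|x - y - 1|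
        have h := neg_abs_le ((s (m - 1 - (k + 1)) : ℤ) - (s (m - 1 - (k + 1) + 1) : ℤ) - 1)
        rw [Int.natCast_natAbs, hj] at *
        linarith
      push_cast
      push_cast at ih' hstep
      rw [hj] at hstep
      linarith
  have key : ∀ j < m, (m : ℤ) - j - d ≤ (s j : ℤ) := by
    intro j hj
    have hk := main (m - 1 - j) (by omega)
    have hjj : m - 1 - (m - 1 - j) = j := by omega
    rw [hjj] at hk
    have hsum : ∑ i ∈ Finset.Ico j (m - 1), (((s i : ℤ) - (s (i + 1) : ℤ) - 1).natAbs : ℤ) ≤ d := by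
      have h1 : ∑ i ∈ Finset.Ico j (m - 1), ((s i : ℤ) - (s (i + 1) : ℤ) - 1).natAbs ≤
          ∑ i ∈ Finset.range (m - 1), ((s i : ℤ) - (s (i + 1) : ℤ) - 1).natAbs := by
        apply Finset.sum_le_sum_of_subset
        intro x hx
        simp only [Finset.mem_Ico] at hx
        simp only [Finset.mem_range]
        omega
      have h2 : ∑ i ∈ Finset.range (m - 1), ((s i : ℤ) - (s (i + 1) : ℤ) - 1).natAbs ≤ d := by
        have := hA
        unfold potA at this
        omega
      exact_mod_cast le_trans h1 h2
    have hc : ((m - 1 - j : ℕ) : ℤ) = (m : ℤ) - 1 - j := by omega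
    rw [hc] at hk
    linarith
  by_cases ht : ((m : ℚ) - d) / 2 ≤ 0
  · exact le_trans ht (by positivity)
  push_neg at ht
  set t : ℚ := ((m : ℚ) - d) / 2 with htdef
  set n := Nat.floor t with hn
  have hsub : Finset.range (min m (n + 1)) ⊆
      (Finset.range m).filter (fun j => t ≤ (s j : ℚ)) := by
    intro j hj
    simp only [Finset.mem_range] at hj
    have hjm : j < m := lt_of_lt_of_le hj (min_le_left _ _)
    simp only [Finset.mem_filter, Finset.mem_range]
    refine ⟨hjm, ?_⟩
    have hk := key j hjm
    have hjn : j ≤ n := by omega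
    have hjt : (j : ℚ) ≤ t :=
      le_trans (by exact_mod_cast hjn) (Nat.floor_le (le_of_lt ht))
    have hq : (m : ℚ) - j - d ≤ (s j : ℚ) := by exact_mod_cast hk
    have h2t : (m : ℚ) - d = 2 * t := by rw [htdef]; ring
    linarith
  have hcard := Finset.card_le_card hsub
  rw [Finset.card_range] at hcard
  have hmin : t ≤ ((min m (n + 1) : ℕ) : ℚ) := by
    have h1 : t < n + 1 := Nat.lt_floor_add_one t
    have h2 : t ≤ m := by
      rw [htdef]
      have hd : (0:ℚ) ≤ d := by positivity
      linarith
    rcases min_cases m (n + 1) with ⟨h, _⟩ | ⟨h, _⟩ <;> rw [h] <;> push_cast <;> linarith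
  exact le_trans hmin (by exact_mod_cast hcard)
end

section
/- Let s_1, …, s_m be a sequence of positive integers. If some s_j = 1 and it is removed from the sequence, the value of A for the resulting sequence is at most the original value (it decreases or stays the same, and in fact strictly decreases when m ≥ 2). Moreover, removing an arbitrary term s_j from the sequence increases the value of A by at most 1. -/
/-!
`Apot` is a sum of local terms `|s_j - s_{j+1} - 1|`, so deleting a term only changes the
one or two terms around it, and the rest of the sum is unaffected. Locally, the triangle
inequality `|x - y - 1| ≤ |x - a - 1| + |a - y - 1| + 1` bounds the increase by `1`; deleting
`a = 1` strictly decreases the sum, because the neighbour `y ≥ 1` makes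
`|x - y - 1| ≤ |x - 2| + (y - 1) < |x - 2| + |1 - y - 1|`.
-/

/-- The potential function on lists:
`A(s_1, …, s_m) = ∑_{j=1}^{m−1} |s_j − s_{j+1} − 1| + |s_m − 2|`,
with `A = 0` on the empty list and `A(s_1) = |s_1 − 2|` on singletons. -/
def Apot : List ℕ → ℕ
  | [] => 0
  | [a] => ((a : ℤ) - 2).natAbs
  | a :: b :: t => ((a : ℤ) - (b : ℤ) - 1).natAbs + Apot (b :: t)

-- `Apot (l ++ c :: u)` depends on `u` only through `Apot (c :: u)`.
theorem Apot_append_cons_add_Apot_cons (l u v : List ℕ) (c : ℕ) :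
    Apot (l ++ c :: u) + Apot (c :: v) = Apot (l ++ c :: v) + Apot (c :: u) := by
  induction l with
  | nil => exact Nat.add_comm _ _
  | cons x l ih =>
    cases l with
    | nil => simp only [List.nil_append, List.cons_append, Apot]; omega
    | cons y l => simp only [List.cons_append, Apot] at ih ⊢; omega

theorem Apot_le_Apot_cons_add_one (a : ℕ) (l : List ℕ) : Apot l ≤ Apot (a :: l) + 1 := by
  cases l <;> simp only [Apot] <;> omega

theorem Apot_lt_Apot_one_cons (l : List ℕ) (hl : ∀ x ∈ l, 1 ≤ x) : Apot l < Apot (1 :: l) := by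
  cases l with
  | nil => simp [Apot]
  | cons b l =>
    have hb : 1 ≤ b := hl b List.mem_cons_self
    simp only [Apot]; omega

theorem Apot_cons_le_Apot_cons_cons_add_one (c a : ℕ) (l : List ℕ) :
    Apot (c :: l) ≤ Apot (c :: a :: l) + 1 := by
  cases l <;> simp only [Apot] <;> omega

theorem Apot_cons_lt_Apot_cons_one_cons (c : ℕ) (l : List ℕ) (hl : ∀ x ∈ l, 1 ≤ x) :
    Apot (c :: l) < Apot (c :: 1 :: l) := by
  cases l with
  | nil => simp only [Apot]; omega
  | cons b l =>
    have hb : 1 ≤ b := hl b List.mem_cons_self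
    simp only [Apot]; omega

theorem Apot_append_le_Apot_append_cons_add_one (l₁ l₂ : List ℕ) (a : ℕ) :
    Apot (l₁ ++ l₂) ≤ Apot (l₁ ++ a :: l₂) + 1 := by
  rcases l₁.eq_nil_or_concat with rfl | ⟨L, c, rfl⟩
  · exact Apot_le_Apot_cons_add_one a l₂
  · have hlocal := Apot_cons_le_Apot_cons_cons_add_one c a l₂
    have hexch := Apot_append_cons_add_Apot_cons L l₂ (a :: l₂) c
    simp only [List.concat_eq_append, List.append_assoc, List.cons_append, List.nil_append]
    omega

theorem Apot_append_lt_Apot_append_one_cons (l₁ l₂ : List ℕ) (hl₂ : ∀ x ∈ l₂, 1 ≤ x) :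
    Apot (l₁ ++ l₂) < Apot (l₁ ++ 1 :: l₂) := by
  rcases l₁.eq_nil_or_concat with rfl | ⟨L, c, rfl⟩
  · exact Apot_lt_Apot_one_cons l₂ hl₂
  · have hlocal := Apot_cons_lt_Apot_cons_one_cons c l₂ hl₂
    have hexch := Apot_append_cons_add_Apot_cons L l₂ (1 :: l₂) c
    simp only [List.concat_eq_append, List.append_assoc, List.cons_append, List.nil_append]
    omega

/-- Removing a term equal to `1` from a sequence of positive integers does not
increase `A` (and strictly decreases it when the sequence has length at least
`2`); removing an arbitrary term increases `A` by at most `1`. -/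
theorem stmt_4 (l₁ l₂ : List ℕ) (a : ℕ)
    (hpos : ∀ x ∈ l₁ ++ a :: l₂, 1 ≤ x) :
    (a = 1 → Apot (l₁ ++ l₂) ≤ Apot (l₁ ++ a :: l₂) ∧
      (2 ≤ (l₁ ++ a :: l₂).length → Apot (l₁ ++ l₂) < Apot (l₁ ++ a :: l₂))) ∧
    Apot (l₁ ++ l₂) ≤ Apot (l₁ ++ a :: l₂) + 1 := by
  refine ⟨?_, Apot_append_le_Apot_append_cons_add_one l₁ l₂ a⟩
  rintro rfl
  have hlt := Apot_append_lt_Apot_append_one_cons l₁ l₂ fun x hx => hpos x (by simp [hx])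
  exact ⟨hlt.le, fun _ => hlt⟩
end

section
/- The value of A(s_1, …, s_m) over all permutations of a fixed multiset of positive integers is minimized when the sequence is sorted in non-increasing order. -/
lemma Apot_cons (x : ℕ) (w : List ℕ) (hw : w ≠ []) :
    Apot (x :: w) = ((x : ℤ) - (w.headI : ℤ) - 1).natAbs + Apot w := by
  cases w with
  | nil => exact absurd rfl hw
  | cons b t => rfl

lemma head_sort_max : ∀ t : List ℕ, t ≠ [] →
    (t.insertionSort (· ≥ ·)).headI = t.foldr max 0 := by
  intro t
  induction t with
  | nil => simp
  | cons b t'' ih =>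
    intro _
    cases t'' with
    | nil => simp [List.insertionSort, List.orderedInsert]
    | cons c r =>
      have hne : (List.insertionSort (· ≥ ·) (c :: r)) ≠ [] := by
        have := List.perm_insertionSort (· ≥ ·) (c :: r)
        intro h
        rw [h] at this
        exact absurd this.symm (by simp)
      obtain ⟨d, w, hdw⟩ : ∃ d w, List.insertionSort (· ≥ ·) (c :: r) = d :: w := by
        cases h : List.insertionSort (· ≥ ·) (c :: r) with
        | nil => exact absurd h hne
        | cons d w => exact ⟨d, w, rfl⟩
      have hd : d = (c :: r).foldr max 0 := by
        have := ih (by simp)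
        rw [hdw] at this
        exact this
      show (List.orderedInsert (· ≥ ·) b (List.insertionSort (· ≥ ·) (c :: r))).headI
          = (b :: c :: r).foldr max 0
      rw [hdw, List.orderedInsert]
      by_cases hb : b ≥ d
      · rw [if_pos hb]
        simp only [List.headI, List.foldr] at *
        omega
      · rw [if_neg hb]
        simp only [List.headI, List.foldr] at *
        omega

lemma insert_le : ∀ (s : List ℕ), s.Pairwise (· ≥ ·) → (∀ x ∈ s, 1 ≤ x) →
    ∀ a : ℕ, 1 ≤ a → a ≤ s.headI → s ≠ [] →
    Apot (List.orderedInsert (· ≥ ·) a s) ≤ Apot s + 1 := by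
  intro s
  induction s with
  | nil => intro _ _ _ _ _ hne; exact absurd rfl hne
  | cons x q ih =>
    intro hsort hpos a ha hle _
    simp only [List.headI] at hle
    rw [List.orderedInsert]
    by_cases hax : a ≥ x
    · rw [if_pos hax]
      have hxa : a = x := le_antisymm hle hax
      subst hxa
      rw [Apot_cons a (a :: q) (by simp)]
      simp only [List.headI]
      omega
    · rw [if_neg hax]
      cases q with
      | nil =>
        show Apot [x, a] ≤ Apot [x] + 1
        have hx : 1 ≤ x := hpos x (by simp)
        simp only [Apot]
        omega
      | cons y q' =>
        have hxy : y ≤ x := (List.pairwise_cons.mp hsort).1 y (by simp)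
        have hy : 1 ≤ y := hpos y (by simp)
        by_cases hay : a ≥ y
        · rw [List.orderedInsert, if_pos hay]
          show ((x:ℤ) - a - 1).natAbs + (((a:ℤ) - y - 1).natAbs + Apot (y::q')) ≤
            ((x:ℤ) - y - 1).natAbs + Apot (y::q') + 1
          omega
        · rw [List.orderedInsert, if_neg hay]
          have hne2 : List.orderedInsert (· ≥ ·) a (y :: q') ≠ [] := by
            rw [List.orderedInsert, if_neg hay]; simp
          have hhead : (List.orderedInsert (· ≥ ·) a (y :: q')).headI = y := by
            rw [List.orderedInsert, if_neg hay]; rfl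
          have hrec := ih (List.pairwise_cons.mp hsort).2
            (fun z hz => hpos z (by simp [hz])) a ha (by simp only [List.headI]; omega)
            (by simp)
          have h1 : Apot (x :: List.orderedInsert (· ≥ ·) a (y :: q')) =
              ((x:ℤ) - y - 1).natAbs + Apot (List.orderedInsert (· ≥ ·) a (y :: q')) := by
            rw [Apot_cons x _ hne2, hhead]
          simp only [List.orderedInsert, if_neg hay] at h1 hrec ⊢
          show Apot (x :: y :: List.orderedInsert (· ≥ ·) a q') ≤
            ((x:ℤ) - y - 1).natAbs + Apot (y :: q') + 1
          omega

lemma key : ∀ (t : List ℕ) (a : ℕ), 1 ≤ a → (∀ x ∈ t, 1 ≤ x) →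
    Apot (List.insertionSort (· ≥ ·) (a :: t)) + ((a :: t).foldr max 0 - a) ≤ Apot (a :: t) := by
  intro t
  induction t with
  | nil =>
    intro a ha _
    simp [List.insertionSort, List.orderedInsert]
  | cons b t'' ih =>
    intro a ha hpos
    have hb : 1 ≤ b := hpos b (by simp)
    have hpt : ∀ x ∈ t'', 1 ≤ x := fun x hx => hpos x (by simp [hx])
    set S := List.insertionSort (· ≥ ·) (b :: t'') with hS
    have hSperm : S.Perm (b :: t'') := List.perm_insertionSort _ _
    have hSsort : S.Pairwise (· ≥ ·) := List.pairwise_insertionSort _ _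
    have hSne : S ≠ [] := by
      intro h; rw [h] at hSperm; exact absurd hSperm.symm (by simp)
    have hhead : S.headI = (b :: t'').foldr max 0 := head_sort_max _ (by simp)
    set Mt := (b :: t'').foldr max 0 with hMt
    have hbM : b ≤ Mt := by simp only [hMt, List.foldr]; omega
    have hSpos : ∀ x ∈ S, 1 ≤ x := fun x hx =>
      (hpos x (hSperm.mem_iff.mp hx))
    have ihb := ih b hb hpt
    rw [← hS] at ihb
    have hins : List.insertionSort (· ≥ ·) (a :: b :: t'') = List.orderedInsert (· ≥ ·) a S := rfl
    have hfold : (a :: b :: t'').foldr max 0 = max a Mt := rfl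
    have hApot : Apot (a :: b :: t'') = ((a:ℤ) - b - 1).natAbs + Apot (b :: t'') := rfl
    by_cases haM : a ≥ Mt
    · obtain ⟨M0, r, hSr⟩ : ∃ M0 r, S = M0 :: r := by
        cases h : S with
        | nil => exact absurd h hSne
        | cons M0 r => exact ⟨M0, r, rfl⟩
      have hM0 : M0 = Mt := by rw [hSr] at hhead; exact hhead
      have hoi : List.orderedInsert (· ≥ ·) a S = a :: S := by
        rw [hSr, List.orderedInsert, if_pos (show a ≥ M0 by omega), ← hSr]
      rw [hins, hoi, Apot_cons a S hSne, hhead, hfold, hApot]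
      omega
    · have hle : a ≤ S.headI := by rw [hhead]; omega
      have hIns := insert_le S hSsort hSpos a ha hle hSne
      rw [hins, hfold, hApot]
      omega

/-- The value of `A` over all permutations of a fixed multiset of positive
integers is minimized when the sequence is sorted in non-increasing order. -/
theorem stmt_5 (l l' : List ℕ) (hpos : ∀ x ∈ l, 1 ≤ x)
    (hperm : l.Perm l') (hsorted : l.Pairwise (· ≥ ·)) :
    Apot l ≤ Apot l' := by
  have hpos' : ∀ x ∈ l', 1 ≤ x := fun x hx => hpos x (hperm.mem_iff.mpr hx)
  have hsorted' : (l'.insertionSort (· ≥ ·)).Pairwise (· ≥ ·) :=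
    List.pairwise_insertionSort _ _
  have hpermS : l.Perm (l'.insertionSort (· ≥ ·)) :=
    hperm.trans (List.perm_insertionSort _ _).symm
  have hl : l = l'.insertionSort (· ≥ ·) :=
    List.Perm.eq_of_pairwise' hsorted hsorted' hpermS
  rw [hl]
  cases l' with
  | nil => simp [List.insertionSort, Apot]
  | cons a t =>
    have := key t a (hpos' a (by simp)) (fun x hx => hpos' x (by simp [hx]))
    omega
end

section
/- For all m ≥ 1 and F ≥ 1, setting m' = m (interpreted as μ(N) − 12F in the application), the following inequality holds: 2F·m³ + 83·m·F² + 27·F·m² + Σ_{t=2}^{m} (m − t + 1)(t² − t + 1) ≤ Σ_{t=2}^{m+12F} (m + 12F − t + 1)(t² − t + 1). -/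
lemma g_closed : ∀ n : ℕ, 1 ≤ n →
    3 * (∑ t ∈ Finset.Icc 2 n, (t ^ 2 - t + 1)) + 3 = n ^ 3 + 2 * n := by
  intro n hn
  induction n, hn using Nat.le_induction with
  | base => simp
  | succ n hn ih =>
    rw [Finset.sum_Icc_succ_top (by omega : 2 ≤ n + 1)]
    have h1 : (n + 1) ^ 2 - (n + 1) + 1 = n ^ 2 + n + 1 := by
      have : (n + 1) ^ 2 = n ^ 2 + 2 * n + 1 := by ring
      omega
    rw [h1]
    nlinarith [ih]

lemma f_closed : ∀ n : ℕ, 1 ≤ n →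
    12 * (∑ t ∈ Finset.Icc 2 n, (n - t + 1) * (t ^ 2 - t + 1)) + 12 * n
      = n ^ 4 + 2 * n ^ 3 + 5 * n ^ 2 + 4 * n := by
  intro n hn
  induction n, hn using Nat.le_induction with
  | base => simp
  | succ n hn ih =>
    have hsplit : ∑ t ∈ Finset.Icc 2 (n + 1), (n + 1 - t + 1) * (t ^ 2 - t + 1)
        = (∑ t ∈ Finset.Icc 2 n, (n - t + 1) * (t ^ 2 - t + 1))
          + ∑ t ∈ Finset.Icc 2 (n + 1), (t ^ 2 - t + 1) := by
      rw [Finset.sum_Icc_succ_top (by omega : 2 ≤ n + 1),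
          Finset.sum_Icc_succ_top (by omega : 2 ≤ n + 1)]
      have hcongr : ∑ t ∈ Finset.Icc 2 n, (n + 1 - t + 1) * (t ^ 2 - t + 1)
          = ∑ t ∈ Finset.Icc 2 n, ((n - t + 1) * (t ^ 2 - t + 1) + (t ^ 2 - t + 1)) := by
        apply Finset.sum_congr rfl
        intro t ht
        have ht' := Finset.mem_Icc.mp ht
        have : n + 1 - t + 1 = (n - t + 1) + 1 := by omega
        rw [this]; ring
      rw [hcongr, Finset.sum_add_distrib]
      have : n + 1 - (n + 1) + 1 = 1 := by omega
      rw [this]; ring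
    rw [hsplit]
    have hg := g_closed (n + 1) (by omega)
    nlinarith [ih, hg]

/-- The key summation inequality in the lower bound on the number of segments:
for all `m ≥ 1` and `F ≥ 1`,
`2F·m³ + 83·m·F² + 27·F·m² + ∑_{t=2}^{m} (m − t + 1)(t² − t + 1)`
`≤ ∑_{t=2}^{m+12F} (m + 12F − t + 1)(t² − t + 1)`. -/
theorem stmt_9 (m F : ℕ) (hm : 1 ≤ m) (hF : 1 ≤ F) :
    2 * F * m ^ 3 + 83 * m * F ^ 2 + 27 * F * m ^ 2
        + ∑ t ∈ Finset.Icc 2 m, (m - t + 1) * (t ^ 2 - t + 1)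
      ≤ ∑ t ∈ Finset.Icc 2 (m + 12 * F), (m + 12 * F - t + 1) * (t ^ 2 - t + 1) := by
  have h1 := f_closed m hm
  have h2 := f_closed (m + 12 * F) (by omega)
  set S1 := ∑ t ∈ Finset.Icc 2 m, (m - t + 1) * (t ^ 2 - t + 1) with hS1
  set S2 := ∑ t ∈ Finset.Icc 2 (m + 12 * F), (m + 12 * F - t + 1) * (t ^ 2 - t + 1) with hS2
  have h3 : F ≤ F ^ 2 := by nlinarith
  have h4 : m * F ^ 2 ≤ m * F ^ 3 := by
    have : F ^ 2 ≤ F ^ 3 := Nat.pow_le_pow_right hF (by omega)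
    exact Nat.mul_le_mul_left m this
  have h5 : F * m ^ 2 ≤ F ^ 2 * m ^ 2 := Nat.mul_le_mul_right _ h3
  nlinarith [h1, h2, h3, h4, h5]
end

section
/- With check_k(z) = 2^{n̄+5}·((1 − z_k)·2^{n̄−k} + z_k·2^{n̄}), an incorrect 'yes' guess at query k+1 costs at least 2^{2n̄+5}, which strictly exceeds 2³·f + Σ_{j=k+1}^{n̄} check_j(z') + 2 for any f ≤ 2^{n̄} and any z' with z'_{k+1} = 0 and z'_j = 0 for j > k+1; concretely 2³·(2^{2n̄−k+2} − 1) + 2 = 2^{2n̄−k+5} − 6 < 2^{2n̄+5} for all k ≥ 1. -/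
/-- `check_k(z) = 2^{n̄+5}·((1 − z_k)·2^{n̄−k} + z_k·2^{n̄})` for bits
`z_k ∈ {0,1}`. -/
def check (nb : ℕ) (z : ℕ → ℕ) (k : ℕ) : ℕ :=
  2 ^ (nb + 5) * ((1 - z k) * 2 ^ (nb - k) + z k * 2 ^ nb)

lemma sumpow (k : ℕ) : ∀ n, k ≤ n → ∑ j ∈ Finset.Icc (k+1) n, 2^(n - j) = 2^(n-k) - 1 := by
  intro n
  induction n with
  | zero => intro h; interval_cases k; simp
  | succ m ih =>
    intro h
    rcases Nat.eq_or_lt_of_le h with h' | h'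
    · subst h'; simp
    · have hk : k ≤ m := Nat.lt_succ_iff.mp h'
      rw [Finset.sum_Icc_succ_top (by omega)]
      have hcong : ∑ j ∈ Finset.Icc (k+1) m, 2^(m+1 - j)
          = ∑ j ∈ Finset.Icc (k+1) m, 2 * 2^(m - j) := by
        apply Finset.sum_congr rfl
        intro j hj
        rw [Finset.mem_Icc] at hj
        have : m + 1 - j = (m - j) + 1 := by omega
        rw [this, pow_succ]; ring
      rw [hcong, ← Finset.mul_sum, ih hk]
      have h1 : 1 ≤ 2^(m-k) := Nat.one_le_two_pow
      have h2 : 2^(m+1-k) = 2 * 2^(m-k) := by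
        have : m + 1 - k = (m - k) + 1 := by omega
        rw [this, pow_succ]; ring
      rw [Nat.sub_self, pow_zero]
      omega

/-- An incorrect 'yes' guess at query `k+1` costs `2^{2n̄+5}`, which strictly
exceeds `2³·f + ∑_{j=k+1}^{n̄} check_j(z') + 2` for any `f ≤ 2^{n̄}` and any
`z'` with `z'_{k+1} = 0` and `z'_j = 0` for `j > k+1`; concretely
`2³·(2^{2n̄−k+2} − 1) + 2 = 2^{2n̄−k+5} − 6 < 2^{2n̄+5}` for all `k ≥ 1`. -/
theorem stmt_16 (nb k f : ℕ) (z z' : ℕ → ℕ)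
    (hbits : ∀ j, z j ≤ 1) (hbits' : ∀ j, z' j ≤ 1)
    (hk1 : 1 ≤ k) (hk : k + 1 ≤ nb) (hf : f ≤ 2 ^ nb)
    (hyes : z (k + 1) = 1) (hno : z' (k + 1) = 0)
    (hzero : ∀ j, k + 1 < j → z' j = 0) :
    check nb z (k + 1) = 2 ^ (2 * nb + 5) ∧
    2 ^ 3 * f + (∑ j ∈ Finset.Icc (k + 1) nb, check nb z' j) + 2
        < 2 ^ (2 * nb + 5) ∧
    2 ^ 3 * (2 ^ (2 * nb - k + 2) - 1) + 2 = 2 ^ (2 * nb - k + 5) - 6 ∧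
    2 ^ (2 * nb - k + 5) - 6 < 2 ^ (2 * nb + 5) := by
  have hz' : ∀ j ∈ Finset.Icc (k+1) nb, z' j = 0 := by
    intro j hj
    rw [Finset.mem_Icc] at hj
    rcases Nat.eq_or_lt_of_le hj.1 with h | h
    · exact h ▸ hno
    · exact hzero j h
  refine ⟨?_, ?_, ?_, ?_⟩
  · simp [check, hyes, ← pow_add]
    ring_nf
  · have hsum : ∑ j ∈ Finset.Icc (k + 1) nb, check nb z' j
        = 2^(nb+5) * (2^(nb-k) - 1) := by
      have : ∑ j ∈ Finset.Icc (k + 1) nb, check nb z' j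
          = ∑ j ∈ Finset.Icc (k + 1) nb, 2^(nb+5) * 2^(nb-j) := by
        apply Finset.sum_congr rfl
        intro j hj
        simp [check, hz' j hj]
      rw [this, ← Finset.mul_sum, sumpow k nb (by omega)]
    rw [hsum]
    have h1 : 2^(nb-k) ≤ 2^(nb-1) := Nat.pow_le_pow_right (by norm_num) (by omega)
    have h2 : 2^(nb+5) * 2^(nb-1) = 2^(2*nb+4) := by
      rw [← pow_add]; congr 1; omega
    have h3 : 2^(nb+5) * (2^(nb-k) - 1) ≤ 2^(2*nb+4) - 2^(nb+5) := by
      rw [Nat.mul_sub, mul_one, ← h2]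
      exact Nat.sub_le_sub_right (Nat.mul_le_mul_left _ h1) _
    have h4 : (2:ℕ)^3 * f ≤ 2^(nb+3) := by
      calc 2^3 * f ≤ 2^3 * 2^nb := Nat.mul_le_mul_left _ hf
        _ = 2^(nb+3) := by rw [← pow_add]; ring_nf
    have h5 : 2^(nb+3) + 2 < 2^(nb+5) := by
      have : (2:ℕ)^(nb+5) = 4 * 2^(nb+3) := by
        rw [show nb+5 = 2 + (nb+3) by omega, pow_add]; norm_num
      have h6 : 1 ≤ (2:ℕ)^(nb+3) := Nat.one_le_two_pow
      omega
    have h7 : (2:ℕ)^(2*nb+5) = 2 * 2^(2*nb+4) := by rw [← pow_succ']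
    have h8 : (2:ℕ)^(nb+5) ≤ 2^(2*nb+4) := Nat.pow_le_pow_right (by norm_num) (by omega)
    omega
  · have h1 : 2^(2*nb-k+5) = 2^3 * 2^(2*nb-k+2) := by rw [← pow_add]; ring_nf
    have h2 : 1 ≤ (2:ℕ)^(2*nb-k+2) := Nat.one_le_two_pow
    omega
  · have h1 : (2:ℕ)^(2*nb-k+5) ≤ 2^(2*nb+5) := Nat.pow_le_pow_right (by norm_num) (by omega)
    have h2 : 6 < (2:ℕ)^(2*nb-k+5) := by
      calc (6:ℕ) < 2^3 := by norm_num
        _ ≤ 2^(2*nb-k+5) := Nat.pow_le_pow_right (by norm_num) (by omega)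
    omega
end
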